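/- arXiv:2512.24357 — 5 statements merged into one kernel-verified Lean document; each statement's English description precedes it below -/
import Mathlib

section
/- Let k be a field, A an associative unital k-algebra with Jacobson radical J, and φ a k-algebra automorphism of A such that φ(x) − x ∈ J² for every x ∈ J. Then for every j ≥ 1 and every x ∈ J, the j-fold composite of the k-linear endomorphism x ↦ φ(x) − x of A sends x into J^{j+1}. In particular, if J^m = 0 for some m ≥ 2, then the (m−1)-fold composite of φ − id vanishes identically on J. -/
/-!
Writing `D = φ - id`, the twisted Leibniz rule `D (a * b) = D a * φ b + a * D b` shows, by
induction on `n`, that `D` raises the `J`-adic filtration by one step: `D (J^(n+1)) ⊆ J^(n+2)`.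
Iterating from `J = J^1` gives `D^[j] J ⊆ J^(j+1)`, and `J^m = 0` kills `D^[m-1]` on `J`.
-/

namespace Submodule

variable {R A F : Type*} [CommSemiring R] [Ring A] [Algebra R A]
  [FunLike F A A] [AlgHomClass F R A A]
  {I : Submodule R A} {φ : F}

theorem sub_self_mem_pow_add_two (hI : I * I ≤ I) (hφ : ∀ x ∈ I, φ x - x ∈ I ^ 2) (n : ℕ) :
    ∀ y ∈ I ^ (n + 1), φ y - y ∈ I ^ (n + 2) := by
  induction n with
  | zero => simpa using hφ
  | succ n ih =>
    have hφI : ∀ b ∈ I, φ b ∈ I := fun b hb => by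
      have h : φ b - b ∈ I := hI (by rw [← pow_two]; exact hφ b hb)
      simpa using add_mem h hb
    let D : A →ₗ[R] A := (AlgHomClass.toAlgHom φ).toLinearMap - LinearMap.id
    suffices I ^ (n + 1) * I ≤ (I ^ (n + 1 + 2)).comap D by
      intro y hy
      exact this (by rwa [pow_succ] at hy)
    refine mul_le.mpr fun a ha b hb => ?_
    have leibniz : φ (a * b) - a * b = (φ a - a) * φ b + a * (φ b - b) := by
      rw [map_mul]; noncomm_ring
    change φ (a * b) - a * b ∈ I ^ (n + 1 + 2)
    rw [leibniz]
    refine add_mem ?_ ?_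
    · rw [pow_succ]
      exact mul_mem_mul (ih a ha) (hφI b hb)
    · rw [pow_add]
      exact mul_mem_mul ha (hφ b hb)

theorem iterate_sub_self_mem_pow (hI : I * I ≤ I) (hφ : ∀ x ∈ I, φ x - x ∈ I ^ 2)
    (j : ℕ) {x : A} (hx : x ∈ I) : (fun y => φ y - y)^[j] x ∈ I ^ (j + 1) := by
  induction j with
  | zero => simpa using hx
  | succ j ih =>
    rw [Function.iterate_succ_apply']
    exact sub_self_mem_pow_add_two hI hφ j _ ih

end Submodule

/-- unipotence of `Ker Φ_A`, paper's Proposition 4.12. Let `k` be a field, `A`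
an associative unital `k`-algebra with Jacobson radical `J`, and `φ` a `k`-algebra automorphism
of `A` with `φ x - x ∈ J²` for all `x ∈ J`.  Then for every `j ≥ 1` the `j`-fold iterate of
`x ↦ φ x - x` maps `J` into `J^(j+1)`; in particular if `J^m = 0` (`m ≥ 2`) then the
`(m-1)`-fold iterate of `φ - id` vanishes on `J`. -/
theorem stmt_1 (k A : Type*) [Field k] [Ring A] [Algebra k A]
    (J : Submodule k A)
    (hJ : J = Submodule.restrictScalars k ((⊥ : Ideal A).jacobson))
    (φ : A ≃ₐ[k] A)
    (hφ : ∀ x ∈ J, φ x - x ∈ J ^ 2) :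
    (∀ j : ℕ, 1 ≤ j → ∀ x ∈ J, (fun y => φ y - y)^[j] x ∈ J ^ (j + 1)) ∧
    (∀ m : ℕ, 2 ≤ m → J ^ m = ⊥ → ∀ x ∈ J, (fun y => φ y - y)^[m - 1] x = 0) := by
  have hJJ : J * J ≤ J := by
    subst hJ
    exact Submodule.mul_le.mpr fun a _ b hb => Ideal.mul_mem_left _ a hb
  refine ⟨fun j _ x hx => Submodule.iterate_sub_self_mem_pow hJJ hφ j hx,
    fun m hm hJm x hx => ?_⟩
  have h := Submodule.iterate_sub_self_mem_pow hJJ hφ (m - 1) hx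
  rwa [Nat.sub_add_cancel (by omega), hJm, Submodule.mem_bot] at h
end

section
/- Let k be a field and A a nontrivial finite-dimensional associative unital k-algebra, and let a be a unit of A. Then the set {t ∈ k : (1−t)·1_A + t·a is not a unit of A} is finite. -/
/-!
For `t ≠ 0` we have `(1 - t) • 1 + t • a = (-t) • ((1 - t⁻¹) • 1 - a)`, so `t` lies in the set
only if `1 - t⁻¹` lies in the spectrum of `a` (and `t = 0` gives `1`). That spectrum is the
spectrum of left multiplication by `a`, an endomorphism of the finite-dimensional space `A`, hence
finite.
-/

section Spectrum

variable {k A : Type*} [Field k] [Ring A] [Algebra k A]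

theorem spectrum_lmul (a : A) : spectrum k (Algebra.lmul k A a) = spectrum k a := by
  ext r
  simp only [spectrum.mem_iff, ← Algebra.lmul_isUnit_iff (R := k), map_sub, AlgHom.commutes]

theorem finite_spectrum_of_finiteDimensional [FiniteDimensional k A] (a : A) :
    (spectrum k a).Finite :=
  spectrum_lmul (k := k) a ▸ Module.End.finite_spectrum _

theorem one_sub_inv_mem_spectrum_of_not_isUnit {a : A} {t : k}
    (h : ¬ IsUnit ((1 - t) • (1 : A) + t • a)) : 1 - t⁻¹ ∈ spectrum k a := by
  have ht : t ≠ 0 := by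
    rintro rfl
    simp at h
  have hsmul : (1 - t) • (1 : A) + t • a =
      Units.mk0 (-t) (neg_ne_zero.mpr ht) • (algebraMap k A (1 - t⁻¹) - a) := by
    have hcoef : -t * (1 - t⁻¹) = 1 - t := by field_simp; ring
    rw [Units.smul_mk0, Algebra.algebraMap_eq_smul_one, smul_sub, smul_smul, hcoef, neg_smul,
      sub_neg_eq_add]
  rw [hsmul, isUnit_smul_iff] at h
  exact spectrum.mem_iff.mpr h

end Spectrum

theorem stmt_2_general (k A : Type*) [Field k] [Ring A] [Algebra k A]
    [FiniteDimensional k A]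
    (a : A) :
    {t : k | ¬ IsUnit ((1 - t) • (1 : A) + t • a)}.Finite := by
  refine ((finite_spectrum_of_finiteDimensional a).image fun μ : k ↦ (1 - μ)⁻¹).subset ?_
  intro t ht
  exact ⟨1 - t⁻¹, one_sub_inv_mem_spectrum_of_not_isUnit ht, by simp⟩

/-- key ingredient of the paper's Proposition 4.1. Let `k` be a field and `A`
a nontrivial finite-dimensional associative unital `k`-algebra, and let `a` be a unit of `A`.
Then the set of scalars `t ∈ k` for which `(1 - t)·1_A + t·a` fails to be a unit is finite. -/
theorem stmt_2 (k A : Type*) [Field k] [Ring A] [Algebra k A]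
    [Nontrivial A] [FiniteDimensional k A]
    (a : A) (ha : IsUnit a) :
    {t : k | ¬ IsUnit ((1 - t) • (1 : A) + t • a)}.Finite :=
  stmt_2_general k A a
end

section
/- Let k be a field, A a finite-dimensional associative unital k-algebra with Jacobson radical J, and A_s a k-subalgebra of A such that A = A_s ⊕ J as k-vector spaces (internal direct sum of subspaces). Let G = {σ ∈ Aut_k(A) : σ(a) = a for all a ∈ A_s} and let H be the group (under composition) of bijective k-linear maps ψ : J → J satisfying ψ(xy) = ψ(x)ψ(y) for all x, y ∈ J and ψ(a r b) = a ψ(r) b for all a, b ∈ A_s and r ∈ J. Then every σ ∈ G maps J onto J, and the restriction map σ ↦ σ|_J is a group isomorphism from G onto H. -/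
/-!
Every ring automorphism preserves the Jacobson radical, so `σ ↦ σ|_J` is a homomorphism `G → H`.
It is injective because `σ ∈ G` is the identity on `A_s` and `A = A_s + J`. Conversely `ψ ∈ H`
extends to `A` by `a + r ↦ a + ψ r`: in `(a + r)(b + s) = ab + (as + rb + rs)` the bimodule
property of `ψ` takes care of `as` and `rb`, and its multiplicativity on `J` of `rs`, so the
extension is an algebra automorphism fixing `A_s`.
-/

noncomputable section

variable (k A : Type*) [Field k] [Ring A] [Algebra k A]

/-- The Jacobson radical of `A`, viewed as a `k`-submodule of `A`. -/
def jacobsonRadical : Submodule k A :=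
  Submodule.restrictScalars k ((⊥ : Ideal A).jacobson)

/-- The Jacobson radical is closed under right multiplication. -/
theorem jacobsonRadical.mul_mem_right {x : A} (b : A) (hx : x ∈ jacobsonRadical k A) :
    x * b ∈ jacobsonRadical k A := by
  have hx' : x ∈ ((⊥ : Ideal A).jacobson) := hx
  rw [Ideal.mem_jacobson_iff] at hx'
  show x * b ∈ ((⊥ : Ideal A).jacobson)
  rw [Ideal.mem_jacobson_iff]
  intro y
  obtain ⟨u, hu⟩ := hx' (b * y)
  rw [Ideal.mem_bot] at hu
  have hc : u * (b * y) * x + u = 1 := sub_eq_zero.mp hu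
  refine ⟨1 - y * x * u * b, ?_⟩
  rw [Ideal.mem_bot]
  have expand : (1 - y * x * u * b) * y * (x * b) + (1 - y * x * u * b) - 1
      = y * x * b - y * x * (u * (b * y) * x + u) * b := by noncomm_ring
  rw [expand, hc]
  noncomm_ring

theorem jacobsonRadical.mul_mem {x y : A} (hx : x ∈ jacobsonRadical k A)
    (hy : y ∈ jacobsonRadical k A) : x * y ∈ jacobsonRadical k A :=
  Ideal.mul_mem_left _ x hy

/-- The subgroup of `k`-algebra automorphisms of `A` fixing the subalgebra `A_s` pointwise. -/
def fixSubgroup (A_s : Subalgebra k A) : Subgroup (A ≃ₐ[k] A) where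
  carrier := {σ | ∀ a ∈ A_s, σ a = a}
  one_mem' := fun _ _ => rfl
  mul_mem' := by
    intro σ τ hσ hτ a ha
    show σ (τ a) = a
    rw [hτ a ha, hσ a ha]
  inv_mem' := by
    intro σ hσ a ha
    show σ.symm a = a
    conv_lhs => rw [← hσ a ha]
    exact σ.symm_apply_apply a

/-- The subgroup of bijective `k`-linear maps `ψ : J → J` such that `ψ (x y) = ψ x · ψ y`
for `x, y ∈ J` and `ψ (a r b) = a · ψ r · b` for `a, b ∈ A_s`, `r ∈ J`
(the `A_s`-bimodule algebra automorphisms of `J`). -/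
def bimodAlgAutSubgroup (A_s : Subalgebra k A) :
    Subgroup ((jacobsonRadical k A) ≃ₗ[k] (jacobsonRadical k A)) where
  carrier := {ψ |
    (∀ x y : jacobsonRadical k A,
        ((ψ ⟨(x : A) * (y : A), jacobsonRadical.mul_mem k A x.2 y.2⟩ : A)
          = (ψ x : A) * (ψ y : A))) ∧
    (∀ a b : A_s, ∀ r : jacobsonRadical k A,
        ∀ h : (a : A) * (r : A) * (b : A) ∈ jacobsonRadical k A,
        ((ψ ⟨(a : A) * (r : A) * (b : A), h⟩ : A) = (a : A) * (ψ r : A) * (b : A)))}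
  one_mem' := ⟨fun _ _ => rfl, fun _ _ _ _ => rfl⟩
  mul_mem' := by
    rintro ψ φ ⟨hψ1, hψ2⟩ ⟨hφ1, hφ2⟩
    constructor
    · intro x y
      have key : φ ⟨(x : A) * (y : A), jacobsonRadical.mul_mem k A x.2 y.2⟩
          = ⟨(φ x : A) * (φ y : A), jacobsonRadical.mul_mem k A (φ x).2 (φ y).2⟩ :=
        Subtype.ext (hφ1 x y)
      show ((ψ (φ _) : A) = _)
      rw [key, hψ1 (φ x) (φ y)]
      rfl
    · intro a b r h
      have hmem : (a : A) * (φ r : A) * (b : A) ∈ jacobsonRadical k A := by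
        rw [← hφ2 a b r h]
        exact (φ ⟨(a : A) * (r : A) * (b : A), h⟩).2
      have key : φ ⟨(a : A) * (r : A) * (b : A), h⟩
          = ⟨(a : A) * (φ r : A) * (b : A), hmem⟩ := Subtype.ext (hφ2 a b r h)
      show ((ψ (φ _) : A) = _)
      rw [key, hψ2 a b (φ r) hmem]
      rfl
  inv_mem' := by
    rintro ψ ⟨hψ1, hψ2⟩
    constructor
    · intro x y
      have key : ψ ⟨(ψ.symm x : A) * (ψ.symm y : A),
            jacobsonRadical.mul_mem k A (ψ.symm x).2 (ψ.symm y).2⟩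
          = ⟨(x : A) * (y : A), jacobsonRadical.mul_mem k A x.2 y.2⟩ := by
        refine Subtype.ext ?_
        rw [hψ1 (ψ.symm x) (ψ.symm y)]
        simp
      show ((ψ.symm ⟨(x : A) * (y : A), _⟩ : A) = (ψ.symm x : A) * (ψ.symm y : A))
      rw [← key, ψ.symm_apply_apply]
    · intro a b r h
      have hmem : (a : A) * (ψ.symm r : A) * (b : A) ∈ jacobsonRadical k A :=
        jacobsonRadical.mul_mem_right k A (b : A)
          (Ideal.mul_mem_left _ (a : A) (ψ.symm r).2)
      have key : ψ ⟨(a : A) * (ψ.symm r : A) * (b : A), hmem⟩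
          = ⟨(a : A) * (r : A) * (b : A), h⟩ := by
        refine Subtype.ext ?_
        rw [hψ2 a b (ψ.symm r) hmem]
        simp
      show ((ψ.symm ⟨(a : A) * (r : A) * (b : A), h⟩ : A)
          = (a : A) * (ψ.symm r : A) * (b : A))
      rw [← key, ψ.symm_apply_apply]

section Restriction

variable {k A}

theorem jacobsonRadical.algEquiv_apply_mem (σ : A ≃ₐ[k] A) {x : A}
    (hx : x ∈ jacobsonRadical k A) : σ x ∈ jacobsonRadical k A := by
  have hx' := Ideal.mem_map_of_mem (σ : A →+* A) hx
  rwa [Ideal.map_jacobson_of_bijective σ.bijective, Ideal.map_bot] at hx'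

theorem jacobsonRadical.map_algEquiv (σ : A ≃ₐ[k] A) :
    (jacobsonRadical k A).map (σ.toLinearEquiv : A →ₗ[k] A) = jacobsonRadical k A :=
  le_antisymm (Submodule.map_le_iff_le_comap.2 fun _ hx => algEquiv_apply_mem σ hx)
    fun x hx => ⟨σ.symm x, algEquiv_apply_mem σ.symm hx, σ.apply_symm_apply x⟩

def AlgEquiv.restrictJacobsonRadical (σ : A ≃ₐ[k] A) :
    jacobsonRadical k A ≃ₗ[k] jacobsonRadical k A :=
  σ.toLinearEquiv.ofSubmodules _ _ (jacobsonRadical.map_algEquiv σ)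

@[simp]
theorem AlgEquiv.coe_restrictJacobsonRadical_apply (σ : A ≃ₐ[k] A) (x : jacobsonRadical k A) :
    (σ.restrictJacobsonRadical x : A) = σ x :=
  rfl

variable (A_s : Subalgebra k A)

def restrictJacobsonRadicalHom : fixSubgroup k A A_s →* bimodAlgAutSubgroup k A A_s where
  toFun σ := ⟨(σ : A ≃ₐ[k] A).restrictJacobsonRadical,
    fun x y => map_mul (σ : A ≃ₐ[k] A) (x : A) y,
    fun a b r _ => by simp [σ.2 a a.2, σ.2 b b.2]⟩
  map_one' := rfl
  map_mul' _ _ := rfl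

variable {A_s}

theorem restrictJacobsonRadicalHom_injective
    (hsup : Subalgebra.toSubmodule A_s ⊔ jacobsonRadical k A = ⊤) :
    Function.Injective (restrictJacobsonRadicalHom A_s) := by
  intro σ τ hστ
  have heq : ⊤ ≤ LinearMap.eqLocus (σ : A ≃ₐ[k] A).toLinearMap (τ : A ≃ₐ[k] A).toLinearMap :=
    hsup ▸ sup_le (fun a ha => (σ.2 a ha).trans (τ.2 a ha).symm)
      fun r hr => congrArg (fun ψ : bimodAlgAutSubgroup k A A_s =>
        ((ψ : jacobsonRadical k A ≃ₗ[k] jacobsonRadical k A) ⟨r, hr⟩ : A)) hστ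
  exact Subtype.ext (AlgEquiv.ext fun x => heq Submodule.mem_top)

end Restriction

section Extension

variable {R E : Type*} [Ring R] [AddCommGroup E] [Module R E] {p q : Submodule R E}

def IsCompl.extendByIdentity (h : IsCompl p q) (ψ : q ≃ₗ[R] q) : E ≃ₗ[R] E :=
  (Submodule.prodEquivOfIsCompl p q h).symm ≪≫ₗ (LinearEquiv.refl R p).prodCongr ψ ≪≫ₗ
    Submodule.prodEquivOfIsCompl p q h

theorem IsCompl.extendByIdentity_add_apply (h : IsCompl p q) (ψ : q ≃ₗ[R] q) {u v : E}
    (hu : u ∈ p) (hv : v ∈ q) : h.extendByIdentity ψ (u + v) = u + ψ ⟨v, hv⟩ := by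
  have hsplit : u + v = Submodule.prodEquivOfIsCompl p q h (⟨u, hu⟩, ⟨v, hv⟩) := rfl
  rw [extendByIdentity, hsplit]
  simp only [LinearEquiv.trans_apply, LinearEquiv.symm_apply_apply]
  rfl

theorem IsCompl.extendByIdentity_apply_of_mem_left (h : IsCompl p q) (ψ : q ≃ₗ[R] q) {u : E}
    (hu : u ∈ p) : h.extendByIdentity ψ u = u := by
  simpa [show (⟨0, q.zero_mem⟩ : q) = 0 from rfl] using
    h.extendByIdentity_add_apply ψ hu q.zero_mem

theorem IsCompl.extendByIdentity_apply_of_mem_right (h : IsCompl p q) (ψ : q ≃ₗ[R] q)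
    (v : q) : h.extendByIdentity ψ v = ψ v := by
  simpa using h.extendByIdentity_add_apply ψ p.zero_mem v.2

end Extension

namespace bimodAlgAutSubgroup

variable {k A} {A_s : Subalgebra k A} {ψ : jacobsonRadical k A ≃ₗ[k] jacobsonRadical k A}

theorem apply_mul_left (hψ : ψ ∈ bimodAlgAutSubgroup k A A_s) {a r : A} (ha : a ∈ A_s)
    (hr : r ∈ jacobsonRadical k A) (har : a * r ∈ jacobsonRadical k A) :
    (ψ ⟨a * r, har⟩ : A) = a * ψ ⟨r, hr⟩ := by
  simpa using hψ.2 ⟨a, ha⟩ 1 ⟨r, hr⟩ (by simpa using har)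

theorem apply_mul_right (hψ : ψ ∈ bimodAlgAutSubgroup k A A_s) {r b : A}
    (hr : r ∈ jacobsonRadical k A) (hb : b ∈ A_s) (hrb : r * b ∈ jacobsonRadical k A) :
    (ψ ⟨r * b, hrb⟩ : A) = ψ ⟨r, hr⟩ * b := by
  simpa using hψ.2 1 ⟨b, hb⟩ ⟨r, hr⟩ (by simpa using hrb)

theorem extendByIdentity_map_mul
    (hcompl : IsCompl (Subalgebra.toSubmodule A_s) (jacobsonRadical k A))
    (hψ : ψ ∈ bimodAlgAutSubgroup k A A_s) (x y : A) :
    hcompl.extendByIdentity ψ (x * y) =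
      hcompl.extendByIdentity ψ x * hcompl.extendByIdentity ψ y := by
  have hdecomp : ∀ z : A, ∃ a ∈ A_s, ∃ r ∈ jacobsonRadical k A, a + r = z := fun z =>
    Submodule.mem_sup.mp (hcompl.sup_eq_top ▸ Submodule.mem_top)
  obtain ⟨a, ha, r, hr, rfl⟩ := hdecomp x
  obtain ⟨b, hb, s, hs, rfl⟩ := hdecomp y
  have has : a * s ∈ jacobsonRadical k A := Ideal.mul_mem_left _ a hs
  have hrb : r * b ∈ jacobsonRadical k A := jacobsonRadical.mul_mem_right k A b hr
  have hrs : r * s ∈ jacobsonRadical k A := jacobsonRadical.mul_mem k A hr hs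
  have hmixed : a * s + r * b + r * s ∈ jacobsonRadical k A := add_mem (add_mem has hrb) hrs
  have hexpand : (a + r) * (b + s) = a * b + (a * s + r * b + r * s) := by noncomm_ring
  have hψ_mixed : (ψ ⟨a * s + r * b + r * s, hmixed⟩ : A) =
      a * ψ ⟨s, hs⟩ + ψ ⟨r, hr⟩ * b + ψ ⟨r, hr⟩ * ψ ⟨s, hs⟩ := by
    rw [← hψ.1 ⟨r, hr⟩ ⟨s, hs⟩, ← apply_mul_left hψ ha hs has, ← apply_mul_right hψ hr hb hrb]
    simp only [← Submodule.coe_add, ← map_add]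
    rfl
  rw [hexpand, hcompl.extendByIdentity_add_apply ψ (A_s.mul_mem ha hb) hmixed, hψ_mixed,
    hcompl.extendByIdentity_add_apply ψ ha hr, hcompl.extendByIdentity_add_apply ψ hb hs]
  noncomm_ring

def extendAlgEquiv (hcompl : IsCompl (Subalgebra.toSubmodule A_s) (jacobsonRadical k A))
    (ψ : bimodAlgAutSubgroup k A A_s) : A ≃ₐ[k] A :=
  AlgEquiv.ofLinearEquiv (hcompl.extendByIdentity ψ)
    (hcompl.extendByIdentity_apply_of_mem_left ψ A_s.one_mem)
    (extendByIdentity_map_mul hcompl ψ.2)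

end bimodAlgAutSubgroup

variable {k A} in
theorem restrictJacobsonRadicalHom_surjective {A_s : Subalgebra k A}
    (hcompl : IsCompl (Subalgebra.toSubmodule A_s) (jacobsonRadical k A)) :
    Function.Surjective (restrictJacobsonRadicalHom A_s) := fun ψ =>
  ⟨⟨bimodAlgAutSubgroup.extendAlgEquiv hcompl ψ,
      fun _ ha => hcompl.extendByIdentity_apply_of_mem_left ψ ha⟩,
    Subtype.ext <| LinearEquiv.ext fun x =>
      Subtype.ext (hcompl.extendByIdentity_apply_of_mem_right ψ x)⟩

theorem stmt_4 (A_s : Subalgebra k A)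
    (hinf : Subalgebra.toSubmodule A_s ⊓ jacobsonRadical k A = ⊥)
    (hsup : Subalgebra.toSubmodule A_s ⊔ jacobsonRadical k A = ⊤) :
    (∀ σ : A ≃ₐ[k] A, (∀ a ∈ A_s, σ a = a) →
        ⇑σ '' ((jacobsonRadical k A : Submodule k A) : Set A)
          = ((jacobsonRadical k A : Submodule k A) : Set A)) ∧
    ∃ e : fixSubgroup k A A_s ≃* bimodAlgAutSubgroup k A A_s,
      ∀ (σ : fixSubgroup k A A_s) (x : jacobsonRadical k A),
        (((e σ : (jacobsonRadical k A) ≃ₗ[k] (jacobsonRadical k A)) x : A))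
          = (σ : A ≃ₐ[k] A) x := by
  have hcompl : IsCompl (Subalgebra.toSubmodule A_s) (jacobsonRadical k A) :=
    ⟨disjoint_iff.mpr hinf, codisjoint_iff.mpr hsup⟩
  refine ⟨fun σ _ => congrArg SetLike.coe (jacobsonRadical.map_algEquiv σ),
    MulEquiv.ofBijective (restrictJacobsonRadicalHom A_s) ⟨?_, ?_⟩, fun _ _ => rfl⟩
  · exact restrictJacobsonRadicalHom_injective hsup
  · exact restrictJacobsonRadicalHom_surjective hcompl

end
end

section
/- Let k be a field, n ≥ 1, and let f ∈ k[X_1,…,X_n] be a homogeneous polynomial of degree d with 2 ≤ d < l. Set I = ⟨X_1,…,X_n⟩^l + ⟨f⟩. Then for every invertible matrix M ∈ GL_n(k): F_M(I) ⊆ I if and only if there exists α ∈ k^× such that F_M(f) = α·f. -/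
open MvPolynomial

/-!
Both `⟨X⟩^l` and `F_M` respect degrees. If `F_M(I) ⊆ I`, write `F_M f = g + h f` with
`g ∈ ⟨X⟩^l`; since `F_M f` is a form of degree `d < l`, comparing degree-`d` components gives
`F_M f = h(0) f`, and `h(0) ≠ 0` unless `f = 0` because `F_M` is injective for invertible `M`.
-/

namespace MvPolynomial

open scoped Matrix

variable {σ R : Type*} [CommSemiring R]

section homogeneousComponent

theorem homogeneousComponent_mul_of_isHomogeneous {f : MvPolynomial σ R} {d : ℕ}
    (hf : f.IsHomogeneous d) (h : MvPolynomial σ R) :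
    homogeneousComponent d (h * f) = C (coeff 0 h) * f := by
  have hcomponent (j : ℕ) : homogeneousComponent d (homogeneousComponent j h * f)
      = if j = 0 then homogeneousComponent 0 h * f else 0 := by
    have hmem : homogeneousComponent j h * f ∈ homogeneousSubmodule σ R (j + d) :=
      (homogeneousComponent_isHomogeneous j h).mul hf
    rw [homogeneousComponent_of_mem hmem]
    by_cases hj : j = 0
    · simp [hj]
    · rw [if_neg (by omega), if_neg hj]
  conv_lhs => rw [← sum_homogeneousComponent h, Finset.sum_mul, map_sum]
  simp [hcomponent, homogeneousComponent_zero]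

theorem homogeneousComponent_eq_zero_of_mem_pow_idealOfVars {g : MvPolynomial σ R} {d l : ℕ}
    (hg : g ∈ idealOfVars σ R ^ l) (hdl : d < l) : homogeneousComponent d g = 0 := by
  ext x
  rw [coeff_homogeneousComponent, coeff_zero]
  split_ifs with hx
  · exact (mem_pow_idealOfVars_iff' l g).mp hg x (hx ▸ hdl)
  · rfl

theorem IsHomogeneous.exists_eq_C_mul_of_mem_pow_idealOfVars_sup_span
    {f p : MvPolynomial σ R} {d l : ℕ} (hf : f.IsHomogeneous d) (hp : p.IsHomogeneous d)
    (hdl : d < l) (hmem : p ∈ idealOfVars σ R ^ l ⊔ Ideal.span {f}) :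
    ∃ c : R, p = C c * f := by
  obtain ⟨g, hg, _, hb, rfl⟩ := Submodule.mem_sup.mp hmem
  obtain ⟨h, rfl⟩ := Ideal.mem_span_singleton'.mp hb
  refine ⟨coeff 0 h, ?_⟩
  rw [← homogeneousComponent_eq_self hp, map_add,
    homogeneousComponent_eq_zero_of_mem_pow_idealOfVars hg hdl, zero_add,
    homogeneousComponent_mul_of_isHomogeneous hf]

end homogeneousComponent

section linearSubst

variable [Fintype σ]

/-- The change of variables `F_M : X j ↦ ∑ i, M i j • X i` of the paper. -/
noncomputable def linearSubst (M : Matrix σ σ R) : MvPolynomial σ R →ₐ[R] MvPolynomial σ R :=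
  aeval Mᵀ.toMvPolynomial

theorem aeval_sum_C_mul_X_eq_linearSubst (M : Matrix σ σ R) :
    aeval (fun j => ∑ i, C (M i j) * X i) = linearSubst M := by
  rw [linearSubst]
  congr 1
  funext j
  simp only [Matrix.toMvPolynomial, Matrix.transpose_apply, C_mul_X_eq_monomial]

theorem linearSubst_X (M : Matrix σ σ R) (j : σ) :
    linearSubst M (X j) = ∑ i, C (M i j) * X i := by
  rw [← aeval_sum_C_mul_X_eq_linearSubst, aeval_X]

theorem linearSubst_mul (A B : Matrix σ σ R) :
    linearSubst (A * B) = (linearSubst A).comp (linearSubst B) := by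
  ext j : 1
  rw [linearSubst, linearSubst, linearSubst, AlgHom.comp_apply, aeval_X, aeval_X,
    Matrix.transpose_mul, Matrix.toMvPolynomial_mul, aeval_eq_bind₁]

theorem linearSubst_one [DecidableEq σ] : linearSubst (1 : Matrix σ σ R) = AlgHom.id R _ := by
  ext p
  simp [linearSubst]

theorem linearSubst_injective [DecidableEq σ] {M : Matrix σ σ R} (hM : IsUnit M) :
    Function.Injective (linearSubst M) := by
  obtain ⟨u, rfl⟩ := hM
  refine Function.LeftInverse.injective (g := linearSubst (u⁻¹ : (Matrix σ σ R)ˣ).val)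
    fun p => ?_
  rw [← AlgHom.comp_apply, ← linearSubst_mul, u.inv_mul, linearSubst_one, AlgHom.id_apply]

theorem IsHomogeneous.linearSubst {p : MvPolynomial σ R} {d : ℕ} (hp : p.IsHomogeneous d)
    (M : Matrix σ σ R) : (linearSubst M p).IsHomogeneous d := by
  simpa only [MvPolynomial.linearSubst, one_mul] using
    hp.aeval _ (Matrix.toMvPolynomial_isHomogeneous Mᵀ)

theorem map_linearSubst_idealOfVars_le (M : Matrix σ σ R) :
    (idealOfVars σ R).map (linearSubst M) ≤ idealOfVars σ R := by
  rw [Ideal.map_span, Ideal.span_le]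
  rintro _ ⟨_, ⟨j, rfl⟩, rfl⟩
  rw [linearSubst_X]
  exact Ideal.sum_mem _ fun i _ => Ideal.mul_mem_left _ _ (Ideal.subset_span ⟨i, rfl⟩)

theorem pow_idealOfVars_le_comap_linearSubst (M : Matrix σ σ R) (l : ℕ) :
    idealOfVars σ R ^ l ≤ (idealOfVars σ R ^ l).comap (linearSubst M) := by
  rw [← Ideal.map_le_iff_le_comap, Ideal.map_pow]
  exact Ideal.pow_right_mono (map_linearSubst_idealOfVars_le M) l

theorem pow_idealOfVars_sup_span_le_comap_linearSubst {M : Matrix σ σ R} {f : MvPolynomial σ R}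
    (hf : linearSubst M f ∈ Ideal.span {f}) (l : ℕ) :
    idealOfVars σ R ^ l ⊔ Ideal.span {f} ≤
      (idealOfVars σ R ^ l ⊔ Ideal.span {f}).comap (linearSubst M) :=
  sup_le ((pow_idealOfVars_le_comap_linearSubst M l).trans (Ideal.comap_mono le_sup_left))
    (Ideal.span_le.mpr (Set.singleton_subset_iff.mpr (Ideal.mem_sup_right hf)))

end linearSubst

end MvPolynomial

theorem stmt_7_general (k : Type*) [Field k] (n l d : ℕ)
    (f : MvPolynomial (Fin n) k) (hf : f.IsHomogeneous d) (hdl : d < l)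
    (I : Ideal (MvPolynomial (Fin n) k))
    (hI : I = (Ideal.span (Set.range (X : Fin n → MvPolynomial (Fin n) k))) ^ l
            + Ideal.span {f})
    (M : GL (Fin n) k) :
    (∀ g ∈ I,
        aeval (fun j => ∑ i, C ((M : Matrix (Fin n) (Fin n) k) i j) * X i) g ∈ I) ↔
    ∃ α : kˣ,
        aeval (fun j => ∑ i, C ((M : Matrix (Fin n) (Fin n) k) i j) * X i) f
          = (α : k) • f := by
  change I = idealOfVars (Fin n) k ^ l ⊔ Ideal.span {f} at hI
  rw [aeval_sum_C_mul_X_eq_linearSubst]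
  subst hI
  constructor
  · intro hstable
    obtain ⟨c, hc⟩ := hf.exists_eq_C_mul_of_mem_pow_idealOfVars_sup_span (hf.linearSubst _) hdl
      (hstable f (Ideal.mem_sup_right (Ideal.mem_span_singleton_self f)))
    by_cases hc0 : c = 0
    · have hf0 : f = 0 := linearSubst_injective M.isUnit (by simp [hc, hc0])
      exact ⟨1, by simp [hf0]⟩
    · exact ⟨Units.mk0 c hc0, by rw [hc, Units.val_mk0, smul_eq_C_mul]⟩
  · rintro ⟨α, hα⟩ g hg
    have hfα : linearSubst (M : Matrix (Fin n) (Fin n) k) f ∈ Ideal.span {f} :=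
      hα ▸ Submodule.smul_of_tower_mem _ (α : k) (Ideal.mem_span_singleton_self f)
    exact pow_idealOfVars_sup_span_le_comap_linearSubst hfα l hg

/-- core of the paper's Proposition 5.12: `Im(Φ_A) = Sim(f)`. Let `f` be a
homogeneous polynomial of degree `d` in `k[X_1,…,X_n]` with `2 ≤ d < l` and set
`I = ⟨X_1,…,X_n⟩^l + ⟨f⟩`.  For every `M ∈ GL_n(k)`, the linear change of variables `F_M`
maps `I` into `I` if and only if `F_M f = α • f` for some `α ∈ k^×`. -/
theorem stmt_7 (k : Type*) [Field k] (n l d : ℕ) (hn : 1 ≤ n)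
    (f : MvPolynomial (Fin n) k) (hf : f.IsHomogeneous d) (hd2 : 2 ≤ d) (hdl : d < l)
    (I : Ideal (MvPolynomial (Fin n) k))
    (hI : I = (Ideal.span (Set.range (X : Fin n → MvPolynomial (Fin n) k))) ^ l
            + Ideal.span {f})
    (M : GL (Fin n) k) :
    (∀ g ∈ I,
        aeval (fun j => ∑ i, C ((M : Matrix (Fin n) (Fin n) k) i j) * X i) g ∈ I) ↔
    ∃ α : kˣ,
        aeval (fun j => ∑ i, C ((M : Matrix (Fin n) (Fin n) k) i j) * X i) f
          = (α : k) • f :=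
  stmt_7_general k n l d f hf hdl I hI M
end

section
/- Let k be an infinite field, n ≥ 1, l ≥ 2, 1 ≤ r ≤ n, and let I be an ideal of k[X_1,…,X_n] with ⟨X_1,…,X_n⟩^l ⊆ I ⊆ ⟨X_1,…,X_n⟩². Then the following are equivalent: (1) for all a_1,…,a_{r−1}, β ∈ k^×, the k-algebra endomorphism D of k[X_1,…,X_n] with D(X_i) = a_i X_i for 1 ≤ i ≤ r−1 and D(X_i) = β X_i for r ≤ i ≤ n satisfies D(I) ⊆ I; (2) there exist finitely many (possibly none) polynomials P_1,…,P_m such that I = ⟨X_1,…,X_n⟩^l + ⟨P_1,…,P_m⟩ and each P_j is either a monomial or an s_j-monomial homogeneous polynomial for some s_j ≥ r. -/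
open MvPolynomial

variable {k : Type*} [Field k] {n : ℕ}

def IsMonomialPoly (p : MvPolynomial (Fin n) k) : Prop :=
  ∃ (c : k) (e : Fin n →₀ ℕ), c ≠ 0 ∧ p = monomial e c

/-- In the paper's 1-based indexing the Lean variable `X i` is `X_{i+1}`, so the last condition
says that `g` lies in the subring generated by `X_s, …, X_n`. -/
def IsSHomogeneousPoly (s : ℕ) (g : MvPolynomial (Fin n) k) : Prop :=
  g ≠ 0 ∧ (∃ d, 0 < d ∧ g.IsHomogeneous d) ∧ ¬ IsMonomialPoly g ∧
    ∀ i ∈ g.vars, s ≤ (i : ℕ) + 1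

def IsSMonomialHomogeneousPoly (s : ℕ) (p : MvPolynomial (Fin n) k) : Prop :=
  ∃ M g, IsMonomialPoly M ∧ IsSHomogeneousPoly s g ∧ p = M * g

/-!
The admissible diagonal maps form a torus `(kˣ)^(r-1) × kˣ`, which scales a monomial `X^u` by a
character determined by the exponents of `X_1, …, X_{r-1}` and the total degree in
`X_r, …, X_n`. Over an infinite field distinct characters are linearly independent functions on
the torus, so an ideal stable under the torus contains every isotypic component of each of its
elements. A nonzero isotypic component is a monomial in `X_1, …, X_{r-1}` times a homogeneous
polynomial in `X_r, …, X_n`, i.e. a monomial or an `r`-monomial homogeneous polynomial, and by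
noetherianity finitely many of them generate `I`. Conversely, the `X_i` and all such polynomials
are eigenvectors of every admissible map, so an ideal generated by them is stable.
-/

namespace MvPolynomial

variable {σ : Type*}

theorem aeval_smul_X_monomial (a : σ → k) (u : σ →₀ ℕ) (c : k) :
    aeval (fun i => a i • X i) (monomial u c) = (u.prod fun i e => a i ^ e) • monomial u c := by
  rw [aeval_monomial, monomial_eq, Finsupp.prod, Finsupp.prod, Finsupp.prod]
  simp_rw [smul_pow, Finset.prod_smul, algebraMap_eq, smul_eq_C_mul]
  ring

theorem aeval_smul_X_of_isHomogeneous {a : σ → k} {β : k} {g : MvPolynomial σ k} {d : ℕ}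
    (hg : g.IsHomogeneous d) (ha : ∀ i ∈ g.vars, a i = β) :
    aeval (fun i => a i • X i) g = β ^ d • g := by
  conv_lhs => rw [← support_sum_monomial_coeff g]
  conv_rhs => rw [← support_sum_monomial_coeff g]
  rw [map_sum, Finset.smul_sum]
  refine Finset.sum_congr rfl fun u hu => ?_
  rw [aeval_smul_X_monomial]
  congr 1
  calc u.prod (fun i e => a i ^ e) = u.prod (fun _ e => β ^ e) :=
        Finsupp.prod_congr fun i hi => by
          rw [ha i ((mem_vars_iff_mem_support i).mpr ⟨u, hu, hi⟩)]
    _ = β ^ d := by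
        rw [Finsupp.prod, Finset.prod_pow_eq_pow_sum, ← Finsupp.degree_apply,
          Finsupp.degree_eq_weight_one]
        exact congrArg _ (hg (mem_support_iff.mp hu))

theorem aeval_smul_X_mem_of_eq_sup_span {ι : Type*} {I : Ideal (MvPolynomial σ k)} {l : ℕ}
    {P : ι → MvPolynomial σ k}
    (hI : I = Ideal.span (Set.range X) ^ l + Ideal.span (Set.range P)) (a : σ → k)
    (hP : ∀ j, ∃ c : k, aeval (fun i => a i • X i) (P j) = c • P j)
    {g : MvPolynomial σ k} (hg : g ∈ I) :
    aeval (fun i => a i • X i) g ∈ I := by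
  set D : MvPolynomial σ k →ₐ[k] MvPolynomial σ k := aeval fun i => a i • X i
  have hspan : ∀ S : Set (MvPolynomial σ k), (∀ x ∈ S, ∃ c : k, D x = c • x) →
      (Ideal.span S).map D ≤ Ideal.span S := by
    intro S hS
    rw [Ideal.map_span, Ideal.span_le]
    rintro _ ⟨x, hx, rfl⟩
    obtain ⟨c, hc⟩ := hS x hx
    rw [SetLike.mem_coe, hc, smul_eq_C_mul]
    exact Ideal.mul_mem_left _ _ (Ideal.subset_span hx)
  suffices I.map D ≤ I from this (Ideal.mem_map_of_mem D hg)
  rw [hI, Submodule.add_eq_sup, Ideal.map_sup, Ideal.map_pow]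
  refine sup_le_sup (Ideal.pow_right_mono (hspan _ ?_) l) (hspan _ ?_)
  · rintro _ ⟨i, rfl⟩
    exact ⟨a i, aeval_X _ _⟩
  · rintro _ ⟨j, rfl⟩
    exact hP j

theorem exists_finset_isWeightedHomogeneous_span_eq {R M : Type*} [CommSemiring R]
    [AddCommMonoid M] [IsNoetherianRing (MvPolynomial σ R)] (w : σ → M)
    {I : Ideal (MvPolynomial σ R)}
    (hI : ∀ f ∈ I, ∀ m, weightedHomogeneousComponent w m f ∈ I) :
    ∃ s : Finset (MvPolynomial σ R),
      (∀ p ∈ s, p ≠ 0 ∧ ∃ m, p.IsWeightedHomogeneous w m) ∧ I = Ideal.span s := by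
  set G := {p | p ∈ I ∧ p ≠ 0 ∧ ∃ m, p.IsWeightedHomogeneous w m}
  have hIG : I = Ideal.span G := by
    refine le_antisymm (fun f hf => ?_) (Ideal.span_le.mpr fun p hp => hp.1)
    rw [← sum_weightedHomogeneousComponent w f,
      finsum_eq_sum _ (weightedHomogeneousComponent_finsupp f)]
    refine Ideal.sum_mem _ fun m _ => ?_
    by_cases h0 : weightedHomogeneousComponent w m f = 0
    · rw [h0]
      exact zero_mem _
    · exact Ideal.subset_span
        ⟨hI f hf m, h0, m, weightedHomogeneousComponent_isWeightedHomogeneous m f⟩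
  obtain ⟨s, hsG, hs⟩ :=
    (Submodule.fg_span_iff_fg_span_finset_subset G).mp (hIG ▸ IsNoetherian.noetherian I)
  exact ⟨s, fun p hp => (hsG hp).2, hIG.trans hs⟩

section FiberWeight

variable {τ : Type*}

/-- The grading by the characters of the torus `τ → kˣ` acting by `X i ↦ t (π i) • X i`. -/
noncomputable def fiberWeight (π : σ → τ) : σ → τ →₀ ℕ :=
  fun i => Finsupp.single (π i) 1

theorem weight_fiberWeight (π : σ → τ) (u : σ →₀ ℕ) :
    Finsupp.weight (fiberWeight π) u = u.mapDomain π := by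
  simp [Finsupp.weight_apply, fiberWeight, Finsupp.mapDomain]

theorem weight_fiberWeight_apply [Fintype σ] [DecidableEq τ] (π : σ → τ) (u : σ →₀ ℕ)
    (j : τ) :
    Finsupp.weight (fiberWeight π) u j = ∑ i with π i = j, u i := by
  simp [Finsupp.weight_eq_sum, fiberWeight, Finsupp.single_apply, Finset.sum_filter]

theorem aeval_smul_X_eq_sum_weightedHomogeneousComponent [DecidableEq τ] (π : σ → τ)
    (t : τ → k) (f : MvPolynomial σ k) :
    aeval (fun i => t (π i) • X i) f =
      ∑ v ∈ f.support.image (Finsupp.weight (fiberWeight π)),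
        (v.prod fun j e => t j ^ e) • weightedHomogeneousComponent (fiberWeight π) v f := by
  conv_lhs => rw [← support_sum_monomial_coeff f]
  simp_rw [map_sum, aeval_smul_X_monomial, weightedHomogeneousComponent_apply, Finset.smul_sum]
  rw [← Finset.sum_fiberwise_of_maps_to (g := Finsupp.weight (fiberWeight π))
    fun u hu => Finset.mem_image_of_mem _ hu]
  refine Finset.sum_congr rfl fun v _ => Finset.sum_congr rfl fun u hu => ?_
  rw [← (Finset.mem_filter.mp hu).2, weight_fiberWeight,
    Finsupp.prod_mapDomain_index (fun _ => pow_zero _) fun _ _ _ => pow_add _ _ _]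

theorem weightedHomogeneousComponent_fiberWeight_mem [Infinite k] (π : σ → τ)
    {I : Ideal (MvPolynomial σ k)}
    (hI : ∀ t : τ → k, (∀ j, t j ≠ 0) →
      ∀ f ∈ I, aeval (fun i => t (π i) • X i) f ∈ I)
    {f : MvPolynomial σ k} (hf : f ∈ I) (v : τ →₀ ℕ) :
    weightedHomogeneousComponent (fiberWeight π) v f ∈ I := by
  classical
  set S := f.support.image (Finsupp.weight (fiberWeight π))
  by_cases hv : v ∈ S
  swap
  · rw [weightedHomogeneousComponent_eq_zero' _ _ fun u hu huv =>
      hv (Finset.mem_image.mpr ⟨u, hu, huv⟩)]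
    exact I.zero_mem
  rw [← Ideal.Quotient.eq_zero_iff_mem, ← Module.forall_dual_apply_eq_zero_iff k]
  intro φ
  set ψ := φ ∘ₗ (Ideal.Quotient.mkₐ k I).toLinearMap
  have hψ : ∀ g ∈ I, ψ g = 0 := fun g hg => by
    simp [ψ, Ideal.Quotient.eq_zero_iff_mem.mpr hg]
  -- `∑ ψ (f_v) T^v` vanishes on `(kˣ)^τ`, an infinite box, so all its coefficients vanish.
  have hQ : ∑ v ∈ S, monomial v (ψ (weightedHomogeneousComponent (fiberWeight π) v f)) = 0 :=
    funext_set (fun _ => {0}ᶜ) (fun _ => (Set.finite_singleton 0).infinite_compl) fun t ht => by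
      have := hψ _ (hI t (fun j => ht j trivial) f hf)
      rw [aeval_smul_X_eq_sum_weightedHomogeneousComponent] at this
      simpa [eval_monomial, mul_comm] using this
  simpa [coeff_sum, coeff_monomial, hv, ψ] using congrArg (coeff v) hQ

end FiberWeight

end MvPolynomial

theorem exists_aeval_smul_X_eq_smul {r : ℕ} {a : Fin n → k}
    (ha : ∀ i j : Fin n, r - 1 ≤ (i : ℕ) → r - 1 ≤ (j : ℕ) → a i = a j)
    {P : MvPolynomial (Fin n) k}
    (hP : IsMonomialPoly P ∨ ∃ s, r ≤ s ∧ IsSMonomialHomogeneousPoly s P) :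
    ∃ c : k, aeval (fun i => a i • X i) P = c • P := by
  rcases hP with ⟨c, u, -, rfl⟩ |
    ⟨s, hrs, _, g, ⟨c, u, -, rfl⟩, ⟨-, ⟨d, -, hg⟩, -, hgs⟩, rfl⟩
  · exact ⟨_, aeval_smul_X_monomial a u c⟩
  obtain ⟨β, hβ⟩ : ∃ β, ∀ i ∈ g.vars, a i = β := by
    rcases g.vars.eq_empty_or_nonempty with h | ⟨i₀, hi₀⟩
    · exact ⟨1, by simp [h]⟩
    · exact ⟨a i₀, fun i hi =>
        ha i i₀ (by have := hgs i hi; omega) (by have := hgs i₀ hi₀; omega)⟩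
  exact ⟨_, by
    rw [map_mul, aeval_smul_X_monomial, aeval_smul_X_of_isHomogeneous hg hβ, smul_mul_smul_comm]⟩

theorem isMonomialPoly_or_isSMonomialHomogeneousPoly_of_support {s d : ℕ}
    {p : MvPolynomial (Fin n) k} (hp0 : p ≠ 0) (e : Fin n →₀ ℕ)
    (hp : ∀ u ∈ p.support,
      ∃ w, u = e + w ∧ w.degree = d ∧ ∀ i ∈ w.support, s ≤ (i : ℕ) + 1) :
    IsMonomialPoly p ∨ IsSMonomialHomogeneousPoly s p := by
  set g := p.divMonomial e
  have hg : ∀ w ∈ g.support, w.degree = d ∧ ∀ i ∈ w.support, s ≤ (i : ℕ) + 1 := by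
    intro w hw
    obtain ⟨w', hw', hd, hs⟩ := hp (e + w) (by simpa [g] using hw)
    obtain rfl := add_left_cancel hw'
    exact ⟨hd, hs⟩
  have hpg : p = monomial e 1 * g := by
    ext u
    rw [coeff_monomial_mul']
    split_ifs with heu
    · rw [one_mul, coeff_divMonomial, add_tsub_cancel_of_le heu]
    · by_contra hu
      obtain ⟨w, rfl, -⟩ := hp u (mem_support_iff.mpr hu)
      exact heu le_self_add
  have hg0 : g ≠ 0 := by
    rintro h
    rw [h, mul_zero] at hpg
    exact hp0 hpg
  have hhom : g.IsHomogeneous d := fun {w} hw => by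
    have := (hg w (mem_support_iff.mpr hw)).1
    rwa [Finsupp.degree_eq_weight_one] at this
  by_cases hgm : IsMonomialPoly g
  · left
    obtain ⟨c, w, hc, hgw⟩ := hgm
    exact ⟨c, e + w, hc, by rw [hpg, hgw, monomial_mul, one_mul]⟩
  right
  have hd : 0 < d := by
    refine Nat.pos_of_ne_zero fun h0 => hgm ?_
    have hC := totalDegree_eq_zero_iff_eq_C.mp (h0 ▸ hhom.totalDegree hg0)
    exact ⟨coeff 0 g, 0, fun h => hg0 (by rw [hC, h, C_0]), hC⟩
  refine ⟨monomial e 1, g, ⟨1, e, one_ne_zero, rfl⟩,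
    ⟨hg0, ⟨d, hd, hhom⟩, hgm, fun i hi => ?_⟩, hpg⟩
  obtain ⟨w, hw, hiw⟩ := (mem_vars_iff_mem_support i).mp hi
  exact (hg w hw).2 i hiw

/-- `fiberWeight (blockIndex m)` records the exponents of the first `m` variables and the total
degree in the others. -/
def blockIndex (m : ℕ) (i : Fin n) : ℕ := min (i : ℕ) m

theorem weight_fiberWeight_blockIndex_of_lt {m : ℕ} (u : Fin n →₀ ℕ) {i : Fin n}
    (hi : (i : ℕ) < m) : Finsupp.weight (fiberWeight (blockIndex m)) u i = u i := by
  rw [weight_fiberWeight_apply, Finset.sum_eq_single_of_mem i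
    (by rw [Finset.mem_filter]; exact ⟨Finset.mem_univ _, min_eq_left hi.le⟩)]
  intro j hj hji
  have hji' : min (j : ℕ) m = i := (Finset.mem_filter.mp hj).2
  exact absurd (Fin.ext (by omega)) hji

theorem weight_fiberWeight_blockIndex_self (m : ℕ) (u : Fin n →₀ ℕ) :
    Finsupp.weight (fiberWeight (blockIndex m)) u m =
      (u.filter fun i : Fin n => m ≤ (i : ℕ)).degree := by
  rw [weight_fiberWeight_apply, Finsupp.degree_eq_sum]
  simp [blockIndex, Finsupp.filter_apply, Finset.sum_filter]

theorem isMonomialPoly_or_isSMonomialHomogeneousPoly_of_isWeightedHomogeneous {r : ℕ}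
    {p : MvPolynomial (Fin n) k} {v : ℕ →₀ ℕ} (hp0 : p ≠ 0)
    (hp : p.IsWeightedHomogeneous (fiberWeight (blockIndex (r - 1))) v) :
    IsMonomialPoly p ∨ IsSMonomialHomogeneousPoly r p := by
  obtain ⟨u₀, hu₀⟩ := support_nonempty.mpr hp0
  refine isMonomialPoly_or_isSMonomialHomogeneousPoly_of_support (d := v (r - 1)) hp0
    (u₀.filter fun i : Fin n => (i : ℕ) < r - 1) fun u hu =>
      ⟨u.filter fun i : Fin n => r - 1 ≤ (i : ℕ), ?_, ?_, fun i hi => ?_⟩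
  · have hw := (hp (mem_support_iff.mp hu)).trans (hp (mem_support_iff.mp hu₀)).symm
    conv_lhs => rw [← Finsupp.filter_add_filter_not u fun i => (i : ℕ) < r - 1]
    congr 1
    · ext i
      simp only [Finsupp.filter_apply]
      split_ifs with hi
      · rw [← weight_fiberWeight_blockIndex_of_lt u hi,
          ← weight_fiberWeight_blockIndex_of_lt u₀ hi, hw]
      · rfl
    · ext i
      simp [Finsupp.filter_apply, not_lt]
  · rw [← weight_fiberWeight_blockIndex_self, hp (mem_support_iff.mp hu)]
  · rw [Finsupp.support_filter, Finset.mem_filter] at hi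
    omega

theorem stmt_12_general (k : Type*) [Field k] [Infinite k] (n l r : ℕ)
    (I : Ideal (MvPolynomial (Fin n) k))
    (hIl : (Ideal.span (Set.range (X : Fin n → MvPolynomial (Fin n) k))) ^ l ≤ I) :
    (∀ a : Fin n → kˣ,
        (∀ i j : Fin n, r - 1 ≤ (i : ℕ) → r - 1 ≤ (j : ℕ) → a i = a j) →
        ∀ g ∈ I, aeval (fun i => (a i : k) • X i) g ∈ I) ↔
    (∃ (m : ℕ) (P : Fin m → MvPolynomial (Fin n) k),
        I = (Ideal.span (Set.range (X : Fin n → MvPolynomial (Fin n) k))) ^ l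
              + Ideal.span (Set.range P) ∧
        ∀ j, IsMonomialPoly (P j) ∨
          ∃ s, r ≤ s ∧ IsSMonomialHomogeneousPoly s (P j)) := by
  constructor
  · intro H
    have hcomp : ∀ f ∈ I, ∀ v,
        weightedHomogeneousComponent (fiberWeight (blockIndex (r - 1))) v f ∈ I :=
      fun f hf => weightedHomogeneousComponent_fiberWeight_mem _
        (fun t ht => H (fun i => Units.mk0 _ (ht _)) fun i j hi hj => by
          simp [blockIndex, min_eq_right hi, min_eq_right hj]) hf
    obtain ⟨s, hs, rfl⟩ := exists_finset_isWeightedHomogeneous_span_eq _ hcomp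
    obtain ⟨m, P, -, hP⟩ := s.finite_toSet.fin_param
    refine ⟨m, P, ?_, fun j => ?_⟩
    · rw [hP]
      exact le_antisymm le_sup_right (sup_le hIl le_rfl)
    · obtain ⟨hP0, v, hv⟩ := hs (P j) (hP.subset (Set.mem_range_self j))
      exact (isMonomialPoly_or_isSMonomialHomogeneousPoly_of_isWeightedHomogeneous hP0 hv)
        |>.imp_right fun h => ⟨r, le_rfl, h⟩
  · rintro ⟨m, P, hI, hP⟩ a ha g
    exact aeval_smul_X_mem_of_eq_sup_span hI _ fun j =>
      exists_aeval_smul_X_eq_smul (fun i j hi hj => congrArg Units.val (ha i j hi hj)) (hP j)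

/-- paper's Theorem 5.25. Let `k` be an infinite field, `1 ≤ r ≤ n`,
`l ≥ 2`, and `I` an ideal with `⟨X_1,…,X_n⟩^l ⊆ I ⊆ ⟨X_1,…,X_n⟩²`.  Then all diagonal
changes of variables `D` with `D(X_i) = a_i X_i` for `1 ≤ i ≤ r-1` and `D(X_i) = β X_i` for
`r ≤ i ≤ n` (`a_i, β ∈ k^×`) map `I` into `I` if and only if
`I = ⟨X_1,…,X_n⟩^l + ⟨P_1,…,P_m⟩` where each `P_j` is a monomial or an `s_j`-monomial
homogeneous polynomial for some `s_j ≥ r`. -/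
theorem stmt_12 (k : Type*) [Field k] [Infinite k] (n l r : ℕ)
    (hn : 1 ≤ n) (hl : 2 ≤ l) (hr1 : 1 ≤ r) (hrn : r ≤ n)
    (I : Ideal (MvPolynomial (Fin n) k))
    (hIl : (Ideal.span (Set.range (X : Fin n → MvPolynomial (Fin n) k))) ^ l ≤ I)
    (hI2 : I ≤ (Ideal.span (Set.range (X : Fin n → MvPolynomial (Fin n) k))) ^ 2) :
    (∀ a : Fin n → kˣ,
        (∀ i j : Fin n, r - 1 ≤ (i : ℕ) → r - 1 ≤ (j : ℕ) → a i = a j) →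
        ∀ g ∈ I, aeval (fun i => (a i : k) • X i) g ∈ I) ↔
    (∃ (m : ℕ) (P : Fin m → MvPolynomial (Fin n) k),
        I = (Ideal.span (Set.range (X : Fin n → MvPolynomial (Fin n) k))) ^ l
              + Ideal.span (Set.range P) ∧
        ∀ j, IsMonomialPoly (P j) ∨
          ∃ s, r ≤ s ∧ IsSMonomialHomogeneousPoly s (P j)) :=
  stmt_12_general k n l r I hIl
end
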